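/- Let h(x) = 12x³/(1 − 2x) − 6x³/(1 − x). For x ∈ (0.1, 0.2), the derivative of the function x ↦ x(x−1)h'(x)/h(x) equals 4x(x−1)/(1−2x)², and in particular this derivative is negative on (0.1, 0.2). -/

import Mathlib

/-! Away from its poles, `h(x) = 6x³/((1−2x)(1−x))`, so its logarithmic derivative is
`3/x + 2/(1−2x) + 1/(1−x)` and `x(x−1)h'(x)/h(x)` is the rational function `x − 3 − x/(1−2x)`,
whose derivative is `1 − 1/(1−2x)² = 4x(x−1)/(1−2x)²`. -/

noncomputable def hfun (x : ℝ) : ℝ := 12 * x^3 / (1 - 2*x) - 6 * x^3 / (1 - x)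

lemma hasDerivAt_one_sub_two_mul (y : ℝ) : HasDerivAt (fun z : ℝ => 1 - 2*z) (-2) y := by
  simpa using ((hasDerivAt_id y).const_mul (2 : ℝ)).const_sub 1

section

variable {y : ℝ}

lemma hfun_eq_div (h1 : 1 - 2*y ≠ 0) (h2 : 1 - y ≠ 0) :
    hfun y = 6 * y^3 / ((1 - 2*y) * (1 - y)) := by
  rw [hfun, div_sub_div _ _ h1 h2]
  ring

lemma hfun_ne_zero (hy : y ≠ 0) (h1 : 1 - 2*y ≠ 0) (h2 : 1 - y ≠ 0) : hfun y ≠ 0 := by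
  rw [hfun_eq_div h1 h2]
  positivity

lemma hasDerivAt_hfun (hy : y ≠ 0) (h1 : 1 - 2*y ≠ 0) (h2 : 1 - y ≠ 0) :
    HasDerivAt hfun (hfun y * (3 / y + 2 / (1 - 2*y) + 1 / (1 - y))) y := by
  have hden2 : HasDerivAt (fun z : ℝ => 1 - z) (-1) y := by
    simpa using (hasDerivAt_id y).const_sub (1:ℝ)
  have hcube (c : ℝ) : HasDerivAt (fun z : ℝ => c * z^3) (c * (3 * y^2)) y := by
    simpa using (hasDerivAt_pow 3 y).const_mul c
  refine (((hcube 12).div (hasDerivAt_one_sub_two_mul y) h1).sub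
    ((hcube 6).div hden2 h2)).congr_deriv ?_
  rw [hfun_eq_div h1 h2]
  -- `field_simp` normalizes `1 - 2*y` to `1 - y*2` and only then looks for a nonvanishing hypothesis.
  have h1' : 1 - y * 2 ≠ 0 := by rwa [mul_comm]
  field_simp
  ring

lemma mul_deriv_hfun_div_hfun (hy : y ≠ 0) (h1 : 1 - 2*y ≠ 0) (h2 : 1 - y ≠ 0) :
    y * (y - 1) * deriv hfun y / hfun y = y - 3 - y / (1 - 2*y) := by
  rw [(hasDerivAt_hfun hy h1 h2).deriv, mul_div_assoc,
    mul_div_cancel_left₀ _ (hfun_ne_zero hy h1 h2)]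
  have h1' : 1 - y * 2 ≠ 0 := by rwa [mul_comm]
  field_simp
  ring

lemma hasDerivAt_sub_div_one_sub_two_mul (h1 : 1 - 2*y ≠ 0) :
    HasDerivAt (fun z : ℝ => z - 3 - z / (1 - 2*z)) (4 * y * (y - 1) / (1 - 2*y)^2) y := by
  refine (((hasDerivAt_id' y).sub_const 3).sub
    ((hasDerivAt_id' y).div (hasDerivAt_one_sub_two_mul y) h1)).congr_deriv ?_
  have h1' : 1 - y * 2 ≠ 0 := by rwa [mul_comm]
  field_simp
  ring

end

/-- On `(0.1, 0.2)`, the derivative of `x ↦ x(x−1)h'(x)/h(x)` equals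
`4x(x−1)/(1−2x)²`, which is negative there. -/
theorem deriv_ratio_eq (x : ℝ) (hx : x ∈ Set.Ioo (0.1 : ℝ) 0.2) :
    deriv (fun y => y * (y - 1) * deriv hfun y / hfun y) x
      = 4 * x * (x - 1) / (1 - 2*x)^2 ∧
    4 * x * (x - 1) / (1 - 2*x)^2 < 0 := by
  obtain ⟨hx₀, hx₁⟩ := hx
  have h1 : 1 - 2*x ≠ 0 := by linarith
  have hratio : (fun y => y * (y - 1) * deriv hfun y / hfun y)
      =ᶠ[nhds x] fun z => z - 3 - z / (1 - 2*z) := by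
    filter_upwards [isOpen_Ioo.mem_nhds (show x ∈ Set.Ioo (0 : ℝ) (1/2) by constructor <;> linarith)]
      with y ⟨hy₀, hy₁⟩
    exact mul_deriv_hfun_div_hfun hy₀.ne' (by linarith) (by linarith)
  refine ⟨by rw [hratio.deriv_eq, (hasDerivAt_sub_div_one_sub_two_mul h1).deriv], ?_⟩
  exact div_neg_of_neg_of_pos (by nlinarith) (by positivity)
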